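/- The set {2^n : n ∈ ℕ} ∪ {2^n + 2n : n ∈ ℕ} is not an I₀ set. -/

import Mathlib

/-- A sequence `ψ : ℕ → ℂ` is almost periodic if it is a uniform limit of
trigonometric polynomials. -/
def AlmostPeriodic (ψ : ℕ → ℂ) : Prop :=
  ∀ ε : ℝ, 0 < ε → ∃ (m : ℕ) (c : Fin m → ℂ) (α : Fin m → ℝ),
    ∀ n : ℕ, ‖ψ n - ∑ j, c j * Complex.exp (2 * (Real.pi : ℂ) * Complex.I * (n : ℂ) * (α j : ℂ))‖ < ε

/-- A set `E ⊆ ℕ` is an `I₀` set if every bounded function on `E` extends to an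
almost periodic sequence on `ℕ`. -/
def IsI0Set (E : Set ℕ) : Prop :=
  ∀ b : ℕ → ℂ, (∃ C : ℝ, ∀ n ∈ E, ‖b n‖ ≤ C) →
    ∃ ψ : ℕ → ℂ, AlmostPeriodic ψ ∧ ∀ r ∈ E, ψ r = b r
/-!
Powers of a point of the compact group `Circleᵐ` return arbitrarily close to `1`, so a
trigonometric polynomial `∑ cⱼ wⱼⁿ`, and hence any uniform limit `ψ` of such, has
arbitrarily large `ε`-almost periods `p` in any progression `dℕ`: `|ψ (n + p) - ψ n| < ε`
for all `n`. Take `b = 0` on powers of two and `b = 1` elsewhere. For `n ≥ 3`, `2ⁿ + 2n`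
lies strictly between `2ⁿ` and `2ⁿ⁺¹`, so a `1`-almost period `p = 2n` of an extension of
`b` would move the value `0` at `2ⁿ` to the value `1` at `2ⁿ + 2n`.
-/

open Filter Topology

theorem Circle.frequently_forall_norm_pow_sub_one_lt {ι : Type*} [Fintype ι]
    (w : ι → Circle) {δ : ℝ} (hδ : 0 < δ) :
    ∃ᶠ k in atTop, ∀ j, ‖((w j ^ k : Circle) : ℂ) - 1‖ < δ := by
  refine (mapClusterPt_one_atTop_pow w).frequently (Metric.ball_mem_nhds 1 hδ) |>.mono ?_
  intro k hk j
  have := (dist_le_pi_dist (w ^ k) 1 j).trans_lt hk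
  rw [Pi.pow_apply, Pi.one_apply] at this
  rwa [← dist_eq_norm]

theorem frequently_norm_sum_mul_pow_add_mul_sub_lt {ι : Type*} [Fintype ι] (c : ι → ℂ)
    (w : ι → Circle) (d : ℕ) {ε : ℝ} (hε : 0 < ε) :
    ∃ᶠ k in atTop, ∀ n, ‖∑ j, c j * ((w j ^ (n + d * k) : Circle) : ℂ) -
      ∑ j, c j * ((w j ^ n : Circle) : ℂ)‖ < ε := by
  set C := ∑ j, ‖c j‖
  have hC : 0 < C + 1 := by positivity
  refine (Circle.frequently_forall_norm_pow_sub_one_lt (w ^ d) (div_pos hε hC)).mono ?_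
  intro k hk n
  calc ‖∑ j, c j * ((w j ^ (n + d * k) : Circle) : ℂ) -
        ∑ j, c j * ((w j ^ n : Circle) : ℂ)‖
      = ‖∑ j, c j * (w j : ℂ) ^ n * (((w ^ d) j ^ k : Circle) - 1)‖ := by
        rw [← Finset.sum_sub_distrib]
        congr 1
        refine Finset.sum_congr rfl fun j _ => ?_
        simp only [Pi.pow_apply, Circle.coe_pow, Circle.coe_mul, pow_add, pow_mul]
        ring
    _ ≤ ∑ j, ‖c j‖ * (ε / (C + 1)) := by
        refine (norm_sum_le _ _).trans (Finset.sum_le_sum fun j _ => ?_)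
        rw [norm_mul, norm_mul, norm_pow, Circle.norm_coe, one_pow, mul_one]
        exact mul_le_mul_of_nonneg_left (hk j).le (norm_nonneg _)
    _ < ε := by
        rw [← Finset.sum_mul, mul_div_assoc', div_lt_iff₀ hC]
        nlinarith

theorem Complex.exp_two_pi_I_mul_natCast_mul (n : ℕ) (a : ℝ) :
    Complex.exp (2 * (Real.pi : ℂ) * Complex.I * (n : ℂ) * (a : ℂ)) =
      ((Circle.exp (2 * Real.pi * a) ^ n : Circle) : ℂ) := by
  rw [Circle.coe_pow, Circle.coe_exp, ← Complex.exp_nat_mul]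
  push_cast
  congr 1
  ring

theorem AlmostPeriodic.frequently_norm_add_mul_sub_lt {ψ : ℕ → ℂ} (hψ : AlmostPeriodic ψ)
    (d : ℕ) {ε : ℝ} (hε : 0 < ε) :
    ∃ᶠ k in atTop, ∀ n, ‖ψ (n + d * k) - ψ n‖ < ε := by
  have hε₃ : 0 < ε / 3 := by positivity
  obtain ⟨m, c, α, hP⟩ := hψ (ε / 3) hε₃
  simp only [Complex.exp_two_pi_I_mul_natCast_mul] at hP
  let w : Fin m → Circle := fun j => Circle.exp (2 * Real.pi * α j)
  refine (frequently_norm_sum_mul_pow_add_mul_sub_lt c w d hε₃).mono ?_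
  intro k hk n
  simp only [← dist_eq_norm] at hP hk ⊢
  calc dist (ψ (n + d * k)) (ψ n)
      < ε / 3 + ε / 3 + ε / 3 := (dist_triangle4 _ _ _ _).trans_lt
        (add_lt_add (add_lt_add (hP _) (hk n)) (by rw [dist_comm]; exact hP n))
    _ = ε := by ring

theorem Nat.two_pow_add_ne_two_pow {n r k : ℕ} (hr₀ : 0 < r) (hr : r < 2 ^ n) :
    2 ^ n + r ≠ 2 ^ k := by
  intro h
  have hlo : n < k := (Nat.pow_lt_pow_iff_right one_lt_two).mp (by omega)
  have hhi : k < n + 1 := (Nat.pow_lt_pow_iff_right one_lt_two).mp (by rw [pow_succ]; omega)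
  omega

theorem Nat.two_mul_lt_two_pow {n : ℕ} (hn : 3 ≤ n) : 2 * n < 2 ^ n := by
  induction n, hn using Nat.le_induction with
  | base => norm_num
  | succ k hk ih =>
    have := Nat.one_lt_two_pow (n := k) (by omega)
    rw [pow_succ]
    omega

theorem union_pow_two_not_I0 :
    ¬ IsI0Set ({m : ℕ | ∃ n : ℕ, 0 < n ∧ m = 2 ^ n} ∪
      {m : ℕ | ∃ n : ℕ, 0 < n ∧ m = 2 ^ n + 2 * n}) := by
  intro hI0
  set b : ℕ → ℂ := (Set.range (2 ^ · : ℕ → ℕ))ᶜ.indicator 1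
  have hb : ∀ m, ‖b m‖ ≤ 1 := fun m => (norm_indicator_le_norm_self 1 m).trans (by simp)
  obtain ⟨ψ, hψ, hψb⟩ := hI0 b ⟨1, fun m _ => hb m⟩
  obtain ⟨n, hper, hn⟩ :=
    ((hψ.frequently_norm_add_mul_sub_lt 2 one_pos).and_eventually (eventually_ge_atTop 3)).exists
  have hpow : ψ (2 ^ n) = 0 := by
    rw [hψb _ (Or.inl ⟨n, by omega, rfl⟩)]
    exact Set.indicator_of_notMem (not_not.2 ⟨n, rfl⟩) _
  have hshift : ψ (2 ^ n + 2 * n) = 1 := by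
    rw [hψb _ (Or.inr ⟨n, by omega, rfl⟩)]
    refine Set.indicator_of_mem ?_ _
    rintro ⟨k, hk⟩
    exact Nat.two_pow_add_ne_two_pow (by omega) (Nat.two_mul_lt_two_pow hn) hk.symm
  simpa [hpow, hshift] using hper (2 ^ n)
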